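/- arXiv:1907.03188 — 2 statements merged into one kernel-verified Lean document; each statement's English description precedes it below -/
import Mathlib

section
/- For every non-negative integer m, the identity Γ(m+3/2)/Γ(m+k+1) = (√π / 2^(2m+1)) * Σ_{n=0}^{m} [(m+1)_n · ⟨m⟩_n · (m+1)_{k+n} · (k+m+2n+1)] / [n! · (k+n)! · (2m+2)_{k+n}] holds for all non-negative integers k, where (x)_n is the rising factorial and ⟨x⟩_n = x(x-1)···(x-n+1) is the falling factorial. -/
/-
After the Gamma values are expanded (`Γ(m + 3/2)` through the double factorial,
`Γ(m + k + 1) = (m + k)!`) and the Pochhammer symbols are written as factorial quotients, the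
theorem says that the terms
`F(m, n) = (m + k + 2n + 1) (m + n)! (m + k + n)! (m + k)! / ((m - n)! n! (k + n)! (2m + k + n + 1)!)`
sum to `1` over `0 ≤ n ≤ m`. This is a Wilf–Zeilberger identity: with a certificate `G` found by
Zeilberger's algorithm, `F(m + 1, n) - F(m, n) = G(m, n + 1) - G(m, n)`, so the sums for `m` and
`m + 1` differ by a telescoping sum, which cancels the new top term `F(m + 1, m + 1) = -G(m, m + 1)`.
-/

/-- Rising factorial (Pochhammer symbol) `(x)_n`. -/
def risingFac (x : ℝ) (n : ℕ) : ℝ := ∏ i ∈ Finset.range n, (x + i)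

/-- Falling factorial `⟨x⟩_n = x(x-1)⋯(x-n+1)`. -/
def fallingFac (x : ℝ) (n : ℕ) : ℝ := ∏ i ∈ Finset.range n, (x - i)

open Finset Nat Real

lemma risingFac_natCast_add_one (a n : ℕ) : risingFac ((a : ℝ) + 1) n = (a + n)! / a ! := by
  rw [eq_div_iff (by positivity), ← Nat.factorial_mul_ascFactorial, risingFac,
    Nat.ascFactorial_eq_prod_range]
  push_cast
  ring

lemma fallingFac_natCast_of_le {a n : ℕ} (h : n ≤ a) : fallingFac a n = a ! / (a - n)! := by
  rw [eq_div_iff (by positivity), fallingFac, ← descPochhammer_eval_eq_prod_range,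
    descPochhammer_eval_eq_descFactorial, mul_comm]
  exact_mod_cast Nat.factorial_mul_descFactorial h

lemma Real.Gamma_nat_add_three_halves (m : ℕ) :
    Real.Gamma (m + 3 / 2) = √π * (2 * m + 1)! / (2 ^ (2 * m + 1) * m !) := by
  rw [show (m : ℝ) + 3 / 2 = m + 1 + 1 / 2 by ring, Real.Gamma_nat_add_one_add_half,
    Nat.factorial_eq_mul_doubleFactorial, Nat.doubleFactorial_two_mul]
  push_cast
  field_simp
  ring

noncomputable def wzTerm (m k n : ℕ) : ℝ :=
  (m + n)! * (m + k + n)! * (m + k)! / ((m - n)! * n ! * (k + n)! * (2 * m + k + n + 1)!)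

noncomputable def wzSummand (m k n : ℕ) : ℝ := (m + k + 2 * n + 1) * wzTerm m k n

-- The WZ certificate `G`, found by Zeilberger's algorithm. Its denominator has `(m + 1 - n)!` rather
-- than `(m - n)! * (m + 1 - n)`, so that it is still correct at `n = m + 1` (truncated subtraction).
noncomputable def wzCertificate (m k n : ℕ) : ℝ :=
  -(n * (n + k) * (3 * m + 2 * k + n + 3) * (m + n)! * (m + k + n)! * (m + k)! /
    ((m + 1 - n)! * n ! * (k + n)! * (2 * m + k + n + 2)!))

lemma wzTerm_succ_left {m n : ℕ} (k : ℕ) (h : n ≤ m) :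
    wzTerm (m + 1) k n = (m + n + 1) * (m + k + n + 1) * (m + k + 1) /
      ((m + 1 - n) * (2 * m + k + n + 2) * (2 * m + k + n + 3)) * wzTerm m k n := by
  obtain ⟨j, rfl⟩ := Nat.exists_eq_add_of_le h
  simp only [wzTerm]
  rw [show n + j + 1 - n = j + 1 by omega, show n + j - n = j by omega,
    show n + j + 1 + n = n + j + n + 1 by omega,
    show n + j + 1 + k + n = n + j + k + n + 1 by omega,
    show n + j + 1 + k = n + j + k + 1 by omega,
    show 2 * (n + j + 1) + k + n + 1 = 2 * (n + j) + k + n + 1 + 1 + 1 by omega]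
  simp only [Nat.factorial_succ]
  push_cast
  rw [show (n : ℝ) + j + 1 - n = j + 1 by ring]
  field_simp
  ring

lemma wzCertificate_eq {m n : ℕ} (k : ℕ) (h : n ≤ m) :
    wzCertificate m k n = -(n * (n + k) * (3 * m + 2 * k + n + 3)) /
      ((m + 1 - n) * (2 * m + k + n + 2)) * wzTerm m k n := by
  obtain ⟨j, rfl⟩ := Nat.exists_eq_add_of_le h
  simp only [wzCertificate, wzTerm]
  rw [show n + j + 1 - n = j + 1 by omega, show n + j - n = j by omega,
    show 2 * (n + j) + k + n + 2 = 2 * (n + j) + k + n + 1 + 1 by omega]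
  simp only [Nat.factorial_succ]
  push_cast
  rw [show (n : ℝ) + j + 1 - n = j + 1 by ring]
  field_simp
  ring

lemma wzCertificate_succ_eq {m n : ℕ} (k : ℕ) (h : n ≤ m) :
    wzCertificate m k (n + 1) = -((3 * m + 2 * k + n + 4) * (m + n + 1) * (m + k + n + 1)) /
      ((2 * m + k + n + 2) * (2 * m + k + n + 3)) * wzTerm m k n := by
  obtain ⟨j, rfl⟩ := Nat.exists_eq_add_of_le h
  simp only [wzCertificate, wzTerm]
  rw [show n + j + 1 - (n + 1) = j by omega, show n + j - n = j by omega,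
    show n + j + (n + 1) = n + j + n + 1 by omega,
    show n + j + k + (n + 1) = n + j + k + n + 1 by omega,
    show k + (n + 1) = k + n + 1 by omega,
    show 2 * (n + j) + k + (n + 1) + 2 = 2 * (n + j) + k + n + 1 + 1 + 1 by omega]
  simp only [Nat.factorial_succ]
  push_cast
  field_simp
  ring

lemma wzSummand_succ_sub {m n : ℕ} (k : ℕ) (h : n ≤ m) :
    wzSummand (m + 1) k n - wzSummand m k n =
      wzCertificate m k (n + 1) - wzCertificate m k n := by
  have hmn : (m : ℝ) + 1 - n ≠ 0 := by
    have : (n : ℝ) ≤ m := by exact_mod_cast h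
    linarith
  rw [wzSummand, wzSummand, wzTerm_succ_left k h, wzCertificate_eq k h,
    wzCertificate_succ_eq k h]
  push_cast
  field_simp
  ring

lemma wzCertificate_zero (m k : ℕ) : wzCertificate m k 0 = 0 := by
  simp [wzCertificate]

lemma wzSummand_succ_self (m k : ℕ) :
    wzSummand (m + 1) k (m + 1) = -wzCertificate m k (m + 1) := by
  simp only [wzSummand, wzTerm, wzCertificate]
  rw [show m + 1 + (m + 1) = m + m + 1 + 1 by omega,
    show m + 1 + k + (m + 1) = m + m + k + 1 + 1 by omega, show m + 1 + k = m + k + 1 by omega,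
    show 2 * (m + 1) + k + (m + 1) + 1 = 2 * m + k + (m + 1) + 2 + 1 by omega,
    show m + (m + 1) = m + m + 1 by omega, show m + k + (m + 1) = m + m + k + 1 by omega,
    show k + (m + 1) = k + m + 1 by omega]
  simp only [Nat.factorial_succ]
  push_cast
  field_simp
  ring

theorem sum_wzSummand (m k : ℕ) : ∑ n ∈ range (m + 1), wzSummand m k n = 1 := by
  induction m with
  | zero =>
    rw [sum_range_one, wzSummand, wzTerm]
    simp only [zero_add, mul_zero, add_zero, Nat.sub_self, factorial_succ, factorial_zero]
    push_cast
    field_simp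
    ring
  | succ m ih =>
    have step : ∀ n ∈ range (m + 1),
        wzSummand (m + 1) k n =
          wzSummand m k n + (wzCertificate m k (n + 1) - wzCertificate m k n) :=
      fun n hn ↦ by
        rw [← wzSummand_succ_sub k (mem_range_succ_iff.mp hn)]; ring
    rw [sum_range_succ, sum_congr rfl step, sum_add_distrib, ih, sum_range_sub,
      wzCertificate_zero, wzSummand_succ_self]
    ring

lemma summand_eq_wzSummand {m n : ℕ} (k : ℕ) (h : n ≤ m) :
    risingFac ((m : ℝ) + 1) n * fallingFac (m : ℝ) n * risingFac ((m : ℝ) + 1) (k + n)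
        * ((k : ℝ) + m + 2 * n + 1) /
      ((n ! : ℝ) * ((k + n)! : ℝ) * risingFac (2 * (m : ℝ) + 2) (k + n)) =
    (2 * m + 1)! / (m ! * (m + k)!) * wzSummand m k n := by
  rw [show 2 * (m : ℝ) + 2 = ((2 * m + 1 : ℕ) : ℝ) + 1 by push_cast; ring,
    risingFac_natCast_add_one, risingFac_natCast_add_one, risingFac_natCast_add_one,
    fallingFac_natCast_of_le h, wzSummand, wzTerm, show m + (k + n) = m + k + n by ring,
    show 2 * m + 1 + (k + n) = 2 * m + k + n + 1 by ring]
  field_simp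
  ring

theorem gamma_quotient_half_integer (m k : ℕ) :
    Real.Gamma ((m : ℝ) + 3 / 2) / Real.Gamma ((m : ℝ) + k + 1) =
      Real.sqrt Real.pi / 2 ^ (2 * m + 1) *
        ∑ n ∈ Finset.range (m + 1),
          risingFac ((m : ℝ) + 1) n * fallingFac (m : ℝ) n * risingFac ((m : ℝ) + 1) (k + n)
              * ((k : ℝ) + m + 2 * n + 1) /
            ((n.factorial : ℝ) * ((k + n).factorial : ℝ) * risingFac (2 * (m : ℝ) + 2) (k + n)) := by
  rw [Real.Gamma_nat_add_three_halves,
    show (m : ℝ) + k + 1 = ((m + k : ℕ) : ℝ) + 1 by push_cast; ring, Real.Gamma_nat_eq_factorial,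
    sum_congr rfl fun n hn ↦ summand_eq_wzSummand k (mem_range_succ_iff.mp hn),
    ← mul_sum, sum_wzSummand]
  field_simp
end

section
/- For m a non-negative integer and integer k ≥ 2, the terms t_n = (m+1/2)_n · ⟨m−1/2⟩_n · (m+1/2)_{k+n} · (k+m+2n+1/2) / [n! · (k+n)! · (2m+1)_{k+n}] satisfy: for n > m, the t_n alternate in sign, |t_n| is monotonically decreasing, and |t_n| → 0 as n → ∞. -/
lemma risingFac_pos {x : ℝ} (hx : 0 < x) (n : ℕ) : 0 < risingFac x n := by
  apply Finset.prod_pos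
  intro i _
  positivity

lemma risingFac_succ (x : ℝ) (n : ℕ) :
    risingFac x (n + 1) = risingFac x n * (x + n) := by
  simp [risingFac, Finset.prod_range_succ]

lemma fallingFac_succ (x : ℝ) (n : ℕ) :
    fallingFac x (n + 1) = fallingFac x n * (x - n) := by
  simp [fallingFac, Finset.prod_range_succ]

lemma half_int_ne_zero (m i : ℕ) : (m : ℝ) - 1 / 2 - i ≠ 0 := by
  intro h
  have h2 : ((2 * ((m : ℤ) - (i : ℤ)) : ℤ) : ℝ) = ((1 : ℤ) : ℝ) := by
    push_cast
    linarith
  have := Int.cast_injective (α := ℝ) h2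
  omega

lemma fallingFac_half_ne_zero (m : ℕ) (n : ℕ) : fallingFac ((m : ℝ) - 1 / 2) n ≠ 0 := by
  apply Finset.prod_ne_zero_iff.2
  intro i _
  exact half_int_ne_zero m i
set_option maxHeartbeats 1600000 in

lemma poly1 (n m k : ℝ) (hm : 0 ≤ m) (hn : m + 1 ≤ n) (hk : 2 ≤ k) :
    (n + m + 1/2) * (n - m + 1/2) * (n + k + m + 1/2) * (2*n + k + m + 5/2)
      < (2*n + k + m + 1/2) * (n + 1) * (n + k + 1) * (n + k + 2*m + 1) := by
  have ha : (0:ℝ) ≤ n - m - 1 := by linarith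
  have hb : (0:ℝ) ≤ k - 2 := by linarith
  have hc : (0:ℝ) ≤ m := hm
  linarith [hc,
    pow_nonneg hc 2,
    pow_nonneg hc 3,
    pow_nonneg hc 4,
    hb,
    mul_nonneg (hb) (hc),
    mul_nonneg (hb) (pow_nonneg hc 2),
    mul_nonneg (hb) (pow_nonneg hc 3),
    pow_nonneg hb 2,
    mul_nonneg (pow_nonneg hb 2) (hc),
    mul_nonneg (pow_nonneg hb 2) (pow_nonneg hc 2),
    pow_nonneg hb 3,
    mul_nonneg (pow_nonneg hb 3) (hc),
    ha,
    mul_nonneg (ha) (hc),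
    mul_nonneg (ha) (pow_nonneg hc 2),
    mul_nonneg (ha) (pow_nonneg hc 3),
    mul_nonneg (ha) (hb),
    mul_nonneg (mul_nonneg (ha) (hb)) (hc),
    mul_nonneg (mul_nonneg (ha) (hb)) (pow_nonneg hc 2),
    mul_nonneg (ha) (pow_nonneg hb 2),
    mul_nonneg (mul_nonneg (ha) (pow_nonneg hb 2)) (hc),
    mul_nonneg (ha) (pow_nonneg hb 3),
    pow_nonneg ha 2,
    mul_nonneg (pow_nonneg ha 2) (hc),
    mul_nonneg (pow_nonneg ha 2) (pow_nonneg hc 2),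
    mul_nonneg (pow_nonneg ha 2) (hb),
    mul_nonneg (mul_nonneg (pow_nonneg ha 2) (hb)) (hc),
    mul_nonneg (pow_nonneg ha 2) (pow_nonneg hb 2),
    pow_nonneg ha 3,
    mul_nonneg (pow_nonneg ha 3) (hc),
    mul_nonneg (pow_nonneg ha 3) (hb)]

set_option maxHeartbeats 1600000 in
lemma poly2 (n m k : ℝ) (hm : 0 ≤ m) (hn : m + 1 ≤ n) (hk : 2 ≤ k) :
    (n + m + 1/2) * (n - m + 1/2) * (n + k + m + 1/2) * (2*n + k + m + 5/2) * (n + 1)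
      ≤ (2*n + k + m + 1/2) * (n + 1) * (n + k + 1) * (n + k + 2*m + 1) * n := by
  have ha : (0:ℝ) ≤ n - m - 1 := by linarith
  have hb : (0:ℝ) ≤ k - 2 := by linarith
  have hc : (0:ℝ) ≤ m := hm
  linarith [hc,
    pow_nonneg hc 2,
    pow_nonneg hc 3,
    pow_nonneg hc 4,
    pow_nonneg hc 5,
    hb,
    mul_nonneg (hb) (hc),
    mul_nonneg (hb) (pow_nonneg hc 2),
    mul_nonneg (hb) (pow_nonneg hc 3),
    mul_nonneg (hb) (pow_nonneg hc 4),
    pow_nonneg hb 2,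
    mul_nonneg (pow_nonneg hb 2) (hc),
    mul_nonneg (pow_nonneg hb 2) (pow_nonneg hc 2),
    mul_nonneg (pow_nonneg hb 2) (pow_nonneg hc 3),
    pow_nonneg hb 3,
    mul_nonneg (pow_nonneg hb 3) (hc),
    mul_nonneg (pow_nonneg hb 3) (pow_nonneg hc 2),
    ha,
    mul_nonneg (ha) (hc),
    mul_nonneg (ha) (pow_nonneg hc 2),
    mul_nonneg (ha) (pow_nonneg hc 3),
    mul_nonneg (ha) (pow_nonneg hc 4),
    mul_nonneg (ha) (hb),
    mul_nonneg (mul_nonneg (ha) (hb)) (hc),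
    mul_nonneg (mul_nonneg (ha) (hb)) (pow_nonneg hc 2),
    mul_nonneg (mul_nonneg (ha) (hb)) (pow_nonneg hc 3),
    mul_nonneg (ha) (pow_nonneg hb 2),
    mul_nonneg (mul_nonneg (ha) (pow_nonneg hb 2)) (hc),
    mul_nonneg (mul_nonneg (ha) (pow_nonneg hb 2)) (pow_nonneg hc 2),
    mul_nonneg (ha) (pow_nonneg hb 3),
    mul_nonneg (mul_nonneg (ha) (pow_nonneg hb 3)) (hc),
    pow_nonneg ha 2,
    mul_nonneg (pow_nonneg ha 2) (hc),
    mul_nonneg (pow_nonneg ha 2) (pow_nonneg hc 2),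
    mul_nonneg (pow_nonneg ha 2) (pow_nonneg hc 3),
    mul_nonneg (pow_nonneg ha 2) (hb),
    mul_nonneg (mul_nonneg (pow_nonneg ha 2) (hb)) (hc),
    mul_nonneg (mul_nonneg (pow_nonneg ha 2) (hb)) (pow_nonneg hc 2),
    mul_nonneg (pow_nonneg ha 2) (pow_nonneg hb 2),
    mul_nonneg (mul_nonneg (pow_nonneg ha 2) (pow_nonneg hb 2)) (hc),
    mul_nonneg (pow_nonneg ha 2) (pow_nonneg hb 3),
    pow_nonneg ha 3,
    mul_nonneg (pow_nonneg ha 3) (hc),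
    mul_nonneg (pow_nonneg ha 3) (pow_nonneg hc 2),
    mul_nonneg (pow_nonneg ha 3) (hb),
    mul_nonneg (mul_nonneg (pow_nonneg ha 3) (hb)) (hc),
    mul_nonneg (pow_nonneg ha 3) (pow_nonneg hb 2),
    pow_nonneg ha 4,
    mul_nonneg (pow_nonneg ha 4) (hc),
    mul_nonneg (pow_nonneg ha 4) (hb)]

set_option maxHeartbeats 4000000 in
theorem leibniz_test_terms (m k : ℕ) (hk : 2 ≤ k)
    (t : ℕ → ℝ)
    (ht : ∀ n : ℕ, t n =
      risingFac ((m : ℝ) + 1 / 2) n * fallingFac ((m : ℝ) - 1 / 2) n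
          * risingFac ((m : ℝ) + 1 / 2) (k + n) * ((k : ℝ) + m + 2 * n + 1 / 2) /
        ((n.factorial : ℝ) * ((k + n).factorial : ℝ) * risingFac (2 * (m : ℝ) + 1) (k + n))) :
    (∀ n : ℕ, m < n → t n * t (n + 1) < 0) ∧
    (∀ n : ℕ, m < n → |t (n + 1)| < |t n|) ∧
    Filter.Tendsto (fun n : ℕ => |t n|) Filter.atTop (nhds 0) := by
  have hmhalf : (0:ℝ) < (m : ℝ) + 1 / 2 := by positivity
  have h2m1 : (0:ℝ) < 2 * (m : ℝ) + 1 := by positivity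
  have htne : ∀ n : ℕ, t n ≠ 0 := by
    intro n
    rw [ht n]
    have h1 := risingFac_pos hmhalf n
    have h2 := fallingFac_half_ne_zero m n
    have h3 := risingFac_pos hmhalf (k + n)
    have h4 : (0:ℝ) < (k : ℝ) + m + 2 * n + 1 / 2 := by positivity
    have h5 : (0:ℝ) < (n.factorial : ℝ) := by positivity
    have h6 : (0:ℝ) < ((k + n).factorial : ℝ) := by positivity
    have h7 := risingFac_pos h2m1 (k + n)
    apply div_ne_zero
    · exact mul_ne_zero (mul_ne_zero (mul_ne_zero h1.ne' h2) h3.ne') h4.ne'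
    · positivity
  -- recurrence
  have hrec : ∀ n : ℕ, t (n + 1) =
      t n * ((((m:ℝ) + 1/2 + n) * ((m:ℝ) - 1/2 - n) * ((m:ℝ) + 1/2 + ((k:ℝ) + n))
              * ((k:ℝ) + m + 2*n + 5/2)) /
             ((((k:ℝ) + m + 2*n + 1/2)) * ((n:ℝ) + 1) * ((k:ℝ) + n + 1)
              * (2*(m:ℝ) + 1 + ((k:ℝ) + n)))) := by
    intro n
    have hkn : k + (n + 1) = (k + n) + 1 := by omega
    rw [ht (n+1), ht n, hkn, risingFac_succ, fallingFac_succ, risingFac_succ, risingFac_succ]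
    have h1 := (risingFac_pos hmhalf n).ne'
    have h3 := (risingFac_pos hmhalf (k + n)).ne'
    have h5 : ((n.factorial : ℝ)) ≠ 0 := by positivity
    have h6 : (((k + n).factorial : ℝ)) ≠ 0 := by positivity
    have h7 := (risingFac_pos h2m1 (k + n)).ne'
    have h4 : ((k : ℝ) + m + 2 * n + 1 / 2) ≠ 0 := by positivity
    have h8 : ((n:ℝ) + 1) ≠ 0 := by positivity
    have h9 : ((k:ℝ) + n + 1) ≠ 0 := by positivity
    have h10 : (2*(m:ℝ) + 1 + ((k:ℝ) + n)) ≠ 0 := by positivity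
    have e1 : ((n+1).factorial : ℝ) = (n.factorial : ℝ) * ((n:ℝ) + 1) := by
      rw [Nat.factorial_succ]; push_cast; ring
    have e2 : (((k+n)+1).factorial : ℝ) = ((k+n).factorial : ℝ) * ((k:ℝ) + n + 1) := by
      rw [Nat.factorial_succ]; push_cast; ring
    rw [e1, e2]
    push_cast
    field_simp
    ring
  have hkR : (2:ℝ) ≤ (k:ℝ) := by exact_mod_cast hk
  have hmR : (0:ℝ) ≤ (m:ℝ) := by positivity
  -- numerator negative, denominator positive for n > m
  have hnum : ∀ n : ℕ, m < n → (((m:ℝ) + 1/2 + n) * ((m:ℝ) - 1/2 - n) * ((m:ℝ) + 1/2 + ((k:ℝ) + n))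
              * ((k:ℝ) + m + 2*n + 5/2)) < 0 := by
    intro n hn
    have hnR : (m:ℝ) + 1 ≤ (n:ℝ) := by exact_mod_cast hn
    have b1 : (0:ℝ) < (m:ℝ) + 1/2 + n := by positivity
    have b2 : ((m:ℝ) - 1/2 - n) < 0 := by linarith
    have b3 : (0:ℝ) < (m:ℝ) + 1/2 + ((k:ℝ) + n) := by positivity
    have b4 : (0:ℝ) < (k:ℝ) + m + 2*n + 5/2 := by positivity
    have key := mul_neg_of_neg_of_pos
      (mul_neg_of_neg_of_pos (mul_neg_of_pos_of_neg b1 b2) b3) b4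
    linarith [key]
  have hden : ∀ n : ℕ, (0:ℝ) < ((((k:ℝ) + m + 2*n + 1/2)) * ((n:ℝ) + 1) * ((k:ℝ) + n + 1)
              * (2*(m:ℝ) + 1 + ((k:ℝ) + n))) := by
    intro n
    positivity
  -- part 1
  have part1 : ∀ n : ℕ, m < n → t n * t (n + 1) < 0 := by
    intro n hn
    rw [hrec n]
    have hr := div_neg_of_neg_of_pos (hnum n hn) (hden n)
    have hsq : 0 < t n * t n := mul_self_pos.mpr (htne n)
    nlinarith [mul_neg_of_pos_of_neg hsq hr]
  -- abs of ratio
  have habs : ∀ n : ℕ, m < n →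
      |(((m:ℝ) + 1/2 + n) * ((m:ℝ) - 1/2 - n) * ((m:ℝ) + 1/2 + ((k:ℝ) + n))
              * ((k:ℝ) + m + 2*n + 5/2)) /
       ((((k:ℝ) + m + 2*n + 1/2)) * ((n:ℝ) + 1) * ((k:ℝ) + n + 1)
              * (2*(m:ℝ) + 1 + ((k:ℝ) + n)))| =
      (-(((m:ℝ) + 1/2 + n) * ((m:ℝ) - 1/2 - n) * ((m:ℝ) + 1/2 + ((k:ℝ) + n))
              * ((k:ℝ) + m + 2*n + 5/2))) /
       ((((k:ℝ) + m + 2*n + 1/2)) * ((n:ℝ) + 1) * ((k:ℝ) + n + 1)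
              * (2*(m:ℝ) + 1 + ((k:ℝ) + n))) := by
    intro n hn
    rw [abs_div, abs_of_neg (hnum n hn), abs_of_pos (hden n)]
  -- part 2
  have part2 : ∀ n : ℕ, m < n → |t (n + 1)| < |t n| := by
    intro n hn
    have hnR : (m:ℝ) + 1 ≤ (n:ℝ) := by exact_mod_cast hn
    rw [hrec n, abs_mul, habs n hn]
    have hlt : (-(((m:ℝ) + 1/2 + n) * ((m:ℝ) - 1/2 - n) * ((m:ℝ) + 1/2 + ((k:ℝ) + n))
              * ((k:ℝ) + m + 2*n + 5/2))) /
       ((((k:ℝ) + m + 2*n + 1/2)) * ((n:ℝ) + 1) * ((k:ℝ) + n + 1)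
              * (2*(m:ℝ) + 1 + ((k:ℝ) + n))) < 1 := by
      rw [div_lt_one (hden n)]
      have p1 := poly1 (n:ℝ) (m:ℝ) (k:ℝ) hmR hnR hkR
      nlinarith [p1]
    calc |t n| * ((-(((m:ℝ) + 1/2 + n) * ((m:ℝ) - 1/2 - n) * ((m:ℝ) + 1/2 + ((k:ℝ) + n))
              * ((k:ℝ) + m + 2*n + 5/2))) /
       ((((k:ℝ) + m + 2*n + 1/2)) * ((n:ℝ) + 1) * ((k:ℝ) + n + 1)
              * (2*(m:ℝ) + 1 + ((k:ℝ) + n))))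
        < |t n| * 1 := by
          exact mul_lt_mul_of_pos_left hlt (abs_pos.mpr (htne n))
      _ = |t n| := mul_one _
  -- step bound for part 3
  have hstep : ∀ n : ℕ, m < n → |t (n + 1)| ≤ |t n| * ((n:ℝ) / ((n:ℝ) + 1)) := by
    intro n hn
    have hnR : (m:ℝ) + 1 ≤ (n:ℝ) := by exact_mod_cast hn
    rw [hrec n, abs_mul, habs n hn]
    have hn1 : (0:ℝ) < (n:ℝ) + 1 := by positivity
    have hle : (-(((m:ℝ) + 1/2 + n) * ((m:ℝ) - 1/2 - n) * ((m:ℝ) + 1/2 + ((k:ℝ) + n))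
              * ((k:ℝ) + m + 2*n + 5/2))) /
       ((((k:ℝ) + m + 2*n + 1/2)) * ((n:ℝ) + 1) * ((k:ℝ) + n + 1)
              * (2*(m:ℝ) + 1 + ((k:ℝ) + n))) ≤ (n:ℝ) / ((n:ℝ) + 1) := by
      rw [div_le_div_iff₀ (hden n) hn1]
      have p2 := poly2 (n:ℝ) (m:ℝ) (k:ℝ) hmR hnR hkR
      nlinarith [p2]
    exact mul_le_mul_of_nonneg_left hle (abs_nonneg _)
  -- inductive bound
  have hbound : ∀ n : ℕ, m + 1 ≤ n → |t n| ≤ |t (m + 1)| * ((m:ℝ) + 1) / (n:ℝ) := by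
    intro n hn
    induction n, hn using Nat.le_induction with
    | base =>
      have h0 : ((m:ℝ) + 1) ≠ 0 := by positivity
      push_cast
      rw [mul_div_assoc, div_self h0, mul_one]
    | succ n hn IH =>
      have hn0 : (0:ℝ) < (n:ℝ) := by
        have : 0 < n := by omega
        exact_mod_cast this
      have hs := hstep n (by omega)
      have h2 : |t n| * ((n:ℝ) / ((n:ℝ) + 1)) ≤
          (|t (m + 1)| * ((m:ℝ) + 1) / (n:ℝ)) * ((n:ℝ) / ((n:ℝ) + 1)) := by
        apply mul_le_mul_of_nonneg_right IH
        positivity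
      have h3 : (|t (m + 1)| * ((m:ℝ) + 1) / (n:ℝ)) * ((n:ℝ) / ((n:ℝ) + 1)) =
          |t (m + 1)| * ((m:ℝ) + 1) / (((n:ℕ) + 1 : ℕ):ℝ) := by
        push_cast
        field_simp
      push_cast at h3 ⊢
      linarith
  -- part 3
  have part3 : Filter.Tendsto (fun n : ℕ => |t n|) Filter.atTop (nhds 0) := by
    apply squeeze_zero' (g := fun n : ℕ => (|t (m + 1)| * ((m:ℝ) + 1)) / (n:ℝ))
    · exact Filter.Eventually.of_forall fun n => abs_nonneg _
    · refine Filter.eventually_atTop.2 ⟨m + 1, fun n hn => ?_⟩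
      have := hbound n hn
      linarith
    · exact tendsto_const_div_atTop_nhds_zero_nat _
  exact ⟨part1, part2, part3⟩
end
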